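/- Monotonicity of runs: writing |t|_k for the length (in ℕ∪{∞}) of the maximal λ-IAM run from the initial state (t, ⟨·⟩, ε, •^k, ↓), one has |t|_k ≤ |t|_{k+1} for all k. -/
import Mathlib


/-! λ-terms, contexts, and the λ-IAM of Accattoli, Dal Lago, Vanoni. -/

inductive Term : Type
  | var : ℕ → Term
  | lam : ℕ → Term → Term
  | app : Term → Term → Term
deriving DecidableEq

inductive Ctx : Type
  | hole : Ctx
  | lam : ℕ → Ctx → Ctx
  | appL : Ctx → Term → Ctx
  | appR : Term → Ctx → Ctx
deriving DecidableEq

/-- Plugging a term in a context (capture allowed). -/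
def Ctx.plug : Ctx → Term → Term
  | .hole, t => t
  | .lam x C, t => .lam x (C.plug t)
  | .appL C u, t => .app (C.plug t) u
  | .appR u C, t => .app u (C.plug t)

/-- Plugging a context in a context. -/
def Ctx.comp : Ctx → Ctx → Ctx
  | .hole, D => D
  | .lam x C, D => .lam x (C.comp D)
  | .appL C u, D => .appL (C.comp D) u
  | .appR u C, D => .appR u (C.comp D)

/-- The level of a context: the number of applications whose right subterm
contains the hole. -/
def Ctx.level : Ctx → ℕ
  | .hole => 0
  | .lam _ C => C.level
  | .appL C _ => C.level
  | .appR _ C => C.level + 1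

/-- Logged positions: a position together with a log (a list of logged
positions). -/
inductive LPos : Type
  | mk : Term → Ctx → List LPos → LPos

/-- Tape entries: the symbol `•` or a logged position. -/
inductive TEnt : Type
  | bullet : TEnt
  | pos : LPos → TEnt

abbrev Tape := List TEnt
abbrev Log := List LPos

def TEnt.isPos : TEnt → Bool
  | .bullet => false
  | .pos _ => true

inductive Dir : Type
  | down
  | up
deriving DecidableEq

def Dir.flip : Dir → Dir
  | .down => .up
  | .up => .down

/-- λ-IAM states. -/
structure State : Type where
  tm : Term
  ctx : Ctx
  log : Log
  tape : Tape
  dir : Dir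

/-- The eight transitions of the λ-IAM (Figure 2). -/
inductive Step : State → State → Prop
  | bul1 : ∀ (t u : Term) (C : Ctx) (L : Log) (T : Tape),
      Step ⟨.app t u, C, L, T, .down⟩
           ⟨t, C.comp (.appL .hole u), L, .bullet :: T, .down⟩
  | bul2 : ∀ (x : ℕ) (t : Term) (C : Ctx) (L : Log) (T : Tape),
      Step ⟨.lam x t, C, L, .bullet :: T, .down⟩
           ⟨t, C.comp (.lam x .hole), L, T, .down⟩
  | tvar : ∀ (x : ℕ) (C D : Ctx) (Ln L : Log) (T : Tape), Ln.length = D.level →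
      Step ⟨.var x, C.comp (.lam x D), Ln ++ L, T, .down⟩
           ⟨.lam x (D.plug (.var x)), C, L, .pos (.mk (.var x) (.lam x D) Ln) :: T, .up⟩
  | bt2 : ∀ (x : ℕ) (C D : Ctx) (Ln L : Log) (T : Tape), Ln.length = D.level →
      Step ⟨.lam x (D.plug (.var x)), C, L, .pos (.mk (.var x) (.lam x D) Ln) :: T, .down⟩
           ⟨.var x, C.comp (.lam x D), Ln ++ L, T, .up⟩
  | bul3 : ∀ (t u : Term) (C : Ctx) (L : Log) (T : Tape),
      Step ⟨u, C.comp (.appL .hole t), L, .bullet :: T, .up⟩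
           ⟨.app u t, C, L, T, .up⟩
  | bul4 : ∀ (x : ℕ) (t : Term) (C : Ctx) (L : Log) (T : Tape),
      Step ⟨t, C.comp (.lam x .hole), L, T, .up⟩
           ⟨.lam x t, C, L, .bullet :: T, .up⟩
  | arg : ∀ (t u : Term) (C : Ctx) (L : Log) (T : Tape) (p : LPos),
      Step ⟨u, C.comp (.appL .hole t), L, .pos p :: T, .up⟩
           ⟨t, C.comp (.appR u .hole), p :: L, T, .down⟩
  | bt1 : ∀ (t u : Term) (C : Ctx) (L : Log) (T : Tape) (p : LPos),
      Step ⟨t, C.comp (.appR u .hole), p :: L, T, .up⟩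
           ⟨u, C.comp (.appL .hole t), L, .pos p :: T, .down⟩

/-- Final states: no transition applies. -/
def Final (s : State) : Prop := ¬ ∃ s', Step s s'

/-- `n` transitions. -/
def StepN : ℕ → State → State → Prop
  | 0, s, s' => s = s'
  | n + 1, s, s'' => ∃ s', Step s s' ∧ StepN n s' s''

/-- Reachability in any number of transitions. -/
def Reaches : State → State → Prop := Relation.ReflTransGen Step

/-- A tape made of `k` occurrences of `•`. -/
def bulls (k : ℕ) : Tape := List.replicate k .bullet

/-- The initial state of code `t` and depth `k`. -/
def initState (t : Term) (k : ℕ) : State := ⟨t, .hole, [], bulls k, .down⟩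


/-- `|t|_k`: the length of the maximal run from the initial state of code `t`
and depth `k` (`∞` if the machine diverges). -/
noncomputable def runLen (t : Term) (k : ℕ) : ℕ∞ :=
  sInf {e : ℕ∞ | ∃ n : ℕ, e = (n : ℕ∞) ∧ ∃ s', StepN n (initState t k) s' ∧ Final s'}

/-- Append a bullet at the end of the tape. -/
def appT (s : State) : State := ⟨s.tm, s.ctx, s.log, s.tape ++ [.bullet], s.dir⟩

lemma comp_ne_hole (C D : Ctx) (hD : D ≠ .hole) : C.comp D ≠ .hole := by
  cases C <;> simp [Ctx.comp, hD]

/-- the constructor at the hole's parent -/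
def hp : Ctx → ℕ
  | .hole => 0
  | .lam _ .hole => 1
  | .lam _ C => hp C
  | .appL .hole _ => 2
  | .appL C _ => hp C
  | .appR _ .hole => 3
  | .appR _ C => hp C

lemma hp_comp (C D : Ctx) (hD : D ≠ .hole) : hp (C.comp D) = hp D := by
  induction C with
  | hole => simp [Ctx.comp]
  | lam x C ih =>
    have h := comp_ne_hole C D hD
    cases hcd : C.comp D with
    | hole => exact absurd hcd h
    | _ => rw [Ctx.comp, hcd, hp, ← hcd, ih] <;> simp
  | appL C u ih =>
    have h := comp_ne_hole C D hD
    cases hcd : C.comp D with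
    | hole => exact absurd hcd h
    | _ => rw [Ctx.comp, hcd, hp, ← hcd, ih] <;> simp
  | appR u C ih =>
    have h := comp_ne_hole C D hD
    cases hcd : C.comp D with
    | hole => exact absurd hcd h
    | _ => rw [Ctx.comp, hcd, hp, ← hcd, ih] <;> simp

lemma appL_ne_lam (C C' : Ctx) (t : Term) (x : ℕ) :
    C.comp (.appL .hole t) ≠ C'.comp (.lam x .hole) := by
  intro h
  have h1 := hp_comp C (.appL .hole t) (by simp)
  have h2 := hp_comp C' (.lam x .hole) (by simp)
  rw [h] at h1
  rw [h1] at h2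
  simp [hp] at h2

lemma appL_ne_appR (C C' : Ctx) (t u : Term) :
    C.comp (.appL .hole t) ≠ C'.comp (.appR u .hole) := by
  intro h
  have h1 := hp_comp C (.appL .hole t) (by simp)
  have h2 := hp_comp C' (.appR u .hole) (by simp)
  rw [h] at h1
  rw [h1] at h2
  simp [hp] at h2

/-- Forward lifting: appending a bullet to the tape preserves steps. -/
lemma step_appT {s s' : State} (h : Step s s') : Step (appT s) (appT s') := by
  cases h with
  | bul1 t u C L T => exact Step.bul1 t u C L (T ++ [.bullet])
  | bul2 x t C L T => exact Step.bul2 x t C L (T ++ [.bullet])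
  | tvar x C D Ln L T hl => exact Step.tvar x C D Ln L (T ++ [.bullet]) hl
  | bt2 x C D Ln L T hl => exact Step.bt2 x C D Ln L (T ++ [.bullet]) hl
  | bul3 t u C L T => exact Step.bul3 t u C L (T ++ [.bullet])
  | bul4 x t C L T => exact Step.bul4 x t C L (T ++ [.bullet])
  | arg t u C L T p => exact Step.arg t u C L (T ++ [.bullet]) p
  | bt1 t u C L T p => exact Step.bt1 t u C L (T ++ [.bullet]) p

lemma final_appT {s : State} (h : Final (appT s)) : Final s := by
  intro ⟨s', hs⟩
  exact h ⟨appT s', step_appT hs⟩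

lemma no_step_appL {w s₂ : State} (h : Step w s₂) :
    ∀ (t u : Term) (C : Ctx) (L : Log), w = ⟨u, C.comp (.appL .hole t), L, [], .up⟩ → False := by
  cases h <;> intro t u C L heq <;>
    obtain ⟨h1, h2, h3, h4, h5⟩ := State.mk.injEq .. ▸ heq <;>
    first
      | simp at h4
      | exact appL_ne_lam _ _ _ _ h2.symm
      | exact appL_ne_appR _ _ _ _ h2
      | exact appL_ne_appR _ _ _ _ h2.symm
      | simp at h5

/-- Reverse simulation. -/
lemma step_appT_rev' {u s₂ : State} (h : Step u s₂) :
    ∀ tm ctx log tape dir, u = ⟨tm, ctx, log, tape ++ [.bullet], dir⟩ →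
    (∃ s', Step ⟨tm, ctx, log, tape, dir⟩ s' ∧ s₂ = appT s') ∨
      Final (⟨tm, ctx, log, tape, dir⟩ : State) := by
  cases h with
  | bul1 t u C L T =>
    rintro tm ctx log tape dir heq
    obtain ⟨rfl, rfl, rfl, rfl, rfl⟩ := State.mk.injEq .. ▸ heq
    exact Or.inl ⟨⟨t, C.comp (.appL .hole u), L, .bullet :: tape, .down⟩,
      Step.bul1 t u C L tape, rfl⟩
  | bul2 x t C L T =>
    rintro tm ctx log tape dir heq
    obtain ⟨rfl, rfl, rfl, htape, rfl⟩ := State.mk.injEq .. ▸ heq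
    cases tape with
    | nil =>
      right
      rintro ⟨s', hs⟩
      cases hs
    | cons e T₀ =>
      simp only [List.cons_append, List.cons.injEq] at htape
      obtain ⟨rfl, hT⟩ := htape
      exact Or.inl ⟨⟨t, C.comp (.lam x .hole), L, T₀, .down⟩,
        Step.bul2 x t C L T₀, by simp [appT, hT]⟩
  | tvar x C D Ln L T hl =>
    rintro tm ctx log tape dir heq
    obtain ⟨rfl, rfl, rfl, rfl, rfl⟩ := State.mk.injEq .. ▸ heq
    exact Or.inl ⟨⟨.lam x (D.plug (.var x)), C, L,
      .pos (.mk (.var x) (.lam x D) Ln) :: tape, .up⟩,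
      Step.tvar x C D Ln L tape hl, rfl⟩
  | bt2 x C D Ln L T hl =>
    rintro tm ctx log tape dir heq
    obtain ⟨rfl, rfl, rfl, htape, rfl⟩ := State.mk.injEq .. ▸ heq
    cases tape with
    | nil => simp at htape
    | cons e T₀ =>
      simp only [List.cons_append, List.cons.injEq] at htape
      obtain ⟨rfl, hT⟩ := htape
      exact Or.inl ⟨⟨.var x, C.comp (.lam x D), Ln ++ L, T₀, .up⟩,
        Step.bt2 x C D Ln L T₀ hl, by simp [appT, hT]⟩
  | bul3 t u C L T =>
    rintro tm ctx log tape dir heq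
    obtain ⟨rfl, rfl, rfl, htape, rfl⟩ := State.mk.injEq .. ▸ heq
    cases tape with
    | nil =>
      right
      rintro ⟨s', hs⟩
      exact no_step_appL hs t u C L rfl
    | cons e T₀ =>
      simp only [List.cons_append, List.cons.injEq] at htape
      obtain ⟨rfl, hT⟩ := htape
      exact Or.inl ⟨⟨.app u t, C, L, T₀, .up⟩,
        Step.bul3 t u C L T₀, by simp [appT, hT]⟩
  | bul4 x t C L T =>
    rintro tm ctx log tape dir heq
    obtain ⟨rfl, rfl, rfl, rfl, rfl⟩ := State.mk.injEq .. ▸ heq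
    exact Or.inl ⟨⟨.lam x t, C, L, .bullet :: tape, .up⟩,
      Step.bul4 x t C L tape, rfl⟩
  | arg t u C L T p =>
    rintro tm ctx log tape dir heq
    obtain ⟨rfl, rfl, rfl, htape, rfl⟩ := State.mk.injEq .. ▸ heq
    cases tape with
    | nil => simp at htape
    | cons e T₀ =>
      simp only [List.cons_append, List.cons.injEq] at htape
      obtain ⟨rfl, hT⟩ := htape
      exact Or.inl ⟨⟨t, C.comp (.appR u .hole), p :: L, T₀, .down⟩,
        Step.arg t u C L T₀ p, by simp [appT, hT]⟩
  | bt1 t u C L T p =>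
    rintro tm ctx log tape dir heq
    obtain ⟨rfl, rfl, rfl, rfl, rfl⟩ := State.mk.injEq .. ▸ heq
    exact Or.inl ⟨⟨u, C.comp (.appL .hole t), L, .pos p :: tape, .down⟩,
      Step.bt1 t u C L tape p, rfl⟩

lemma step_appT_rev {s s₂ : State} (h : Step (appT s) s₂) :
    (∃ s', Step s s' ∧ s₂ = appT s') ∨ Final s := by
  obtain ⟨tm, ctx, log, tape, dir⟩ := s
  exact step_appT_rev' h tm ctx log tape dir rfl

lemma sim : ∀ (n : ℕ) (s s₂ : State), StepN n (appT s) s₂ → Final s₂ →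
    ∃ m ≤ n, ∃ s'', StepN m s s'' ∧ Final s'' := by
  intro n
  induction n with
  | zero =>
    intro s s₂ h hf
    cases h
    exact ⟨0, le_rfl, s, rfl, final_appT hf⟩
  | succ n ih =>
    intro s s₂ h hf
    obtain ⟨s₁, h1, h2⟩ := h
    rcases step_appT_rev h1 with ⟨s', hs, rfl⟩ | hfin
    · obtain ⟨m, hm, s'', hs'', hf''⟩ := ih s' s₂ h2 hf
      exact ⟨m + 1, Nat.succ_le_succ hm, s'', ⟨s', hs, hs''⟩, hf''⟩
    · exact ⟨0, Nat.zero_le _, s, rfl, hfin⟩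

lemma initState_succ (t : Term) (k : ℕ) : initState t (k + 1) = appT (initState t k) := by
  simp [initState, appT, bulls, List.replicate_succ']

/-- monotonicity of runs: `|t|_k ≤ |t|_{k+1}`. -/
theorem run_length_monotone (t : Term) (k : ℕ) : runLen t k ≤ runLen t (k + 1) := by
  apply le_sInf
  rintro e ⟨n, rfl, s', hrun, hfin⟩
  rw [initState_succ] at hrun
  obtain ⟨m, hm, s'', hs'', hf''⟩ := sim n (initState t k) s' hrun hfin
  calc runLen t k ≤ (m : ℕ∞) := sInf_le ⟨m, rfl, s'', hs'', hf''⟩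
    _ ≤ (n : ℕ∞) := by exact_mod_cast hm
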